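/- If U and V are unitary operators on a Hilbert space, then the Hausdorff distance between their spectra (as compact subsets of ℂ) is at most ‖U − V‖. -/

import Mathlib

/-!
For a normal element `a` of a C⋆-algebra, the continuous functional calculus identifies the
resolvent at `z` with `w ↦ (z - w)⁻¹` on the spectrum, so `‖resolvent a z‖` is the reciprocal of
the distance from `z` to `σ a`. On the other hand, `algebraMap z - b` is a perturbation of the unit
`algebraMap z - a` by `a - b`, so it stays invertible as long as `‖b - a‖ < ‖resolvent a z‖⁻¹`.
Hence every point of `σ b` lies within `‖b - a‖` of `σ a`, and symmetrically.
-/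

open Metric

theorem spectrum.inv_norm_resolvent_le_norm_sub {𝕜 A : Type*} [NormedField 𝕜] [NormedRing A]
    [NormedAlgebra 𝕜 A] [HasSummableGeomSeries A] {a b : A} {z : 𝕜}
    (hb : z ∈ spectrum 𝕜 b) (ha : z ∉ spectrum 𝕜 a) : ‖resolvent a z‖⁻¹ ≤ ‖b - a‖ := by
  obtain ⟨u, hu⟩ := spectrum.notMem_iff.mp ha
  rw [resolvent, ← hu, Ring.inverse_unit]
  by_contra! h
  exact spectrum.mem_iff.mp hb
    (u.ofNearby (algebraMap 𝕜 A z - b) (by rwa [hu, sub_sub_sub_cancel_left, norm_sub_rev])).isUnit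

namespace IsStarNormal

variable {A : Type*} [CStarAlgebra A]

theorem norm_resolvent {a : A} [IsStarNormal a] {z : ℂ} (hz : z ∉ spectrum ℂ a) :
    ‖resolvent a z‖ = (infDist z (spectrum ℂ a))⁻¹ := by
  nontriviality A
  have hne : ∀ w ∈ spectrum ℂ a, z - w ≠ 0 := fun w hw h ↦ hz (sub_eq_zero.mp h ▸ hw)
  have hres : resolvent a z = cfc (fun w ↦ (z - w)⁻¹) a := by
    rw [cfc_inv (fun w ↦ z - w) a hne, cfc_sub (fun _ ↦ z) (fun w ↦ w), cfc_const z a,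
      cfc_id' ℂ a]
    rfl
  obtain ⟨w, hw, hdist⟩ := (spectrum.isCompact a).exists_infDist_eq_dist (spectrum.nonempty a) z
  have hpos : 0 < dist z w := dist_pos.mpr (ne_of_mem_of_not_mem hw hz).symm
  rw [hres, hdist]
  refine le_antisymm (norm_cfc_le (by positivity) fun x hx ↦ ?_) ?_
  · rw [norm_inv, ← dist_eq_norm, ← hdist]
    exact inv_anti₀ (hdist ▸ hpos) (infDist_le_dist_of_mem hx)
  · rw [dist_eq_norm, ← norm_inv]
    exact norm_apply_le_norm_cfc (fun w ↦ (z - w)⁻¹) a hw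
      ((continuousOn_const.sub continuousOn_id).inv₀ hne)

theorem infDist_spectrum_le_norm_sub {a b : A} [IsStarNormal a] {z : ℂ}
    (hz : z ∈ spectrum ℂ b) : infDist z (spectrum ℂ a) ≤ ‖b - a‖ := by
  by_cases hza : z ∈ spectrum ℂ a
  · simp [infDist_zero_of_mem hza]
  · rw [← inv_inv (infDist z _), ← norm_resolvent hza]
    exact spectrum.inv_norm_resolvent_le_norm_sub hz hza

theorem hausdorffDist_spectrum_le_norm_sub (a b : A) [IsStarNormal a] [IsStarNormal b] :
    hausdorffDist (spectrum ℂ a) (spectrum ℂ b) ≤ ‖a - b‖ :=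
  hausdorffDist_le_of_infDist (norm_nonneg _)
    (fun _ hz ↦ infDist_spectrum_le_norm_sub hz)
    (fun _ hz ↦ norm_sub_rev a b ▸ infDist_spectrum_le_norm_sub hz)

end IsStarNormal

theorem stmt_2 {H : Type*} [NormedAddCommGroup H] [InnerProductSpace ℂ H] [CompleteSpace H]
    (U V : H →L[ℂ] H) (hU : U ∈ unitary (H →L[ℂ] H)) (hV : V ∈ unitary (H →L[ℂ] H)) :
    Metric.hausdorffDist (spectrum ℂ U) (spectrum ℂ V) ≤ ‖U - V‖ := by
  have := isStarNormal_of_mem_unitary hU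
  have := isStarNormal_of_mem_unitary hV
  exact IsStarNormal.hausdorffDist_spectrum_le_norm_sub U V
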